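/- arXiv:1305.1865 — 3 statements merged into one kernel-verified Lean document; each statement's English description precedes it below -/
import Mathlib

section
/- For every cube Q in ℝⁿ with sides parallel to the axes, there exist 2ⁿ translated dyadic grids D_β = {2^{-k}([0,1)ⁿ + j + (-1)^k β) : k ∈ ℤ, j ∈ ℤⁿ} with β ∈ {0, 1/3}ⁿ, such that for some β there is a cube Q_β ∈ D_β with Q ⊆ Q_β and side length ℓ(Q_β) ≤ 6 ℓ(Q). -/
open MeasureTheory ENNReal NNReal Set

noncomputable section

/-- Euclidean space `ℝⁿ`. -/
abbrev En (n : ℕ) := EuclideanSpace ℝ (Fin n)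

/-- The axis-parallel half-open cube with lower corner `a` and side length `h`. -/
def Cube (n : ℕ) (a : Fin n → ℝ) (h : ℝ) : Set (En n) :=
  {x | ∀ i, a i ≤ x i ∧ x i < a i + h}

/-- Conjugate exponent `p' = p/(p-1)`. -/
def rconj (p : ℝ) : ℝ := p / (p - 1)

/-- Multilinear fractional maximal operator `M_α`. -/
def MFrac (m n : ℕ) (α : ℝ) (f : Fin m → En n → ℝ) (x : En n) : ℝ≥0∞ :=
  ⨆ (a : Fin n → ℝ) (h : ℝ) (_ : 0 < h) (_ : x ∈ Cube n a h),
    ∏ i, (volume (Cube n a h)) ^ (α / (m * n : ℝ) - 1) *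
      ∫⁻ y in Cube n a h, (‖f i y‖₊ : ℝ≥0∞)

/-- Cube of the translated dyadic grid `D_β`. -/
def GridCube (n : ℕ) (β : Fin n → ℝ) (k : ℤ) (j : Fin n → ℤ) : Set (En n) :=
  Cube n (fun i => (2:ℝ) ^ (-k) * ((j i : ℝ) + (-1 : ℝ) ^ k * β i)) ((2:ℝ) ^ (-k))

/-- Multilinear fractional maximal operator restricted to the grid `D_β`. -/
def MFracGrid (m n : ℕ) (α : ℝ) (β : Fin n → ℝ) (f : Fin m → En n → ℝ) (x : En n) : ℝ≥0∞ :=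
  ⨆ (k : ℤ) (j : Fin n → ℤ) (_ : x ∈ GridCube n β k j),
    ∏ i, (volume (GridCube n β k j)) ^ (α / (m * n : ℝ) - 1) *
      ∫⁻ y in GridCube n β k j, (‖f i y‖₊ : ℝ≥0∞)

/-- The multiple weight constant `[ω]_{A_{(P,q)}}` (all `p i > 1`). -/
def Apq (m n : ℕ) (p : Fin m → ℝ) (q : ℝ) (ω : Fin m → En n → ℝ≥0∞) : ℝ≥0∞ :=
  ⨆ (a : Fin n → ℝ) (h : ℝ) (_ : 0 < h),
    ((volume (Cube n a h))⁻¹ * ∫⁻ x in Cube n a h, (∏ i, ω i x) ^ q) *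
      ∏ i, ((volume (Cube n a h))⁻¹ *
        ∫⁻ x in Cube n a h, ω i x ^ (-(rconj (p i)))) ^ (q / rconj (p i))

/-- Hardy–Littlewood maximal operator (over cubes). -/
def HLMax (n : ℕ) (g : En n → ℝ≥0∞) (x : En n) : ℝ≥0∞ :=
  ⨆ (a : Fin n → ℝ) (h : ℝ) (_ : 0 < h) (_ : x ∈ Cube n a h),
    (volume (Cube n a h))⁻¹ * ∫⁻ y in Cube n a h, g y

/-- The Fujii–Wilson `A_∞` constant. -/
def AInfty (n : ℕ) (w : En n → ℝ≥0∞) : ℝ≥0∞ :=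
  ⨆ (a : Fin n → ℝ) (h : ℝ) (_ : 0 < h),
    (∫⁻ x in Cube n a h, w x)⁻¹ *
      ∫⁻ x in Cube n a h, HLMax n ((Cube n a h).indicator w) x

/-- Weighted `L^p` "norm" `(∫ F^p w)^{1/p}` for `ℝ≥0∞`-valued `F`. -/
def wnorm (n : ℕ) (p : ℝ) (w : En n → ℝ≥0∞) (F : En n → ℝ≥0∞) : ℝ≥0∞ :=
  (∫⁻ x, F x ^ p * w x) ^ (1 / p)

/-- Multilinear fractional maximal operator with rough homogeneous kernel `Ω`. -/
def MOmega (m n : ℕ) (α : ℝ) (Ω : (Fin m → En n) → ℝ) (f : Fin m → En n → ℝ)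
    (x : En n) : ℝ≥0∞ :=
  ⨆ (a : Fin n → ℝ) (h : ℝ) (_ : 0 < h) (_ : x ∈ Cube n a h),
    (volume (Cube n a h)) ^ (α / (n : ℝ) - m) *
      ∫⁻ y in univ.pi (fun _ : Fin m => Cube n a h),
        (‖Ω (fun i => x - y i)‖₊ : ℝ≥0∞) * ∏ i, (‖f i (y i)‖₊ : ℝ≥0∞)

/-- The `L^s((S^{n-1})^m)` norm of a (degree-zero homogeneous) kernel, realized through the
cone measure on the product of unit spheres. -/
def sphereNorm (m n : ℕ) (s : ℝ) (Ω : (Fin m → En n) → ℝ) : ℝ≥0∞ :=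
  eLpNorm Ω (ENNReal.ofReal s)
    (Measure.map (fun (y : Fin m → En n) (i : Fin m) => ‖y i‖⁻¹ • y i)
      (((n : ℝ≥0∞) ^ m) • volume.restrict (univ.pi fun _ : Fin m => Metric.ball (0 : En n) 1)))

/-- Euclidean norm of `(y₁, …, y_m) ∈ (ℝⁿ)^m`. -/
def bigNorm (m n : ℕ) (y : Fin m → En n) : ℝ := Real.sqrt (∑ i, ‖y i‖ ^ 2)

/-- Multilinear fractional integral with rough homogeneous kernel (absolute values). -/
def IOmega (m n : ℕ) (α : ℝ) (Ω : (Fin m → En n) → ℝ) (f : Fin m → En n → ℝ)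
    (x : En n) : ℝ≥0∞ :=
  ∫⁻ y : Fin m → En n,
    ENNReal.ofReal (bigNorm m n y ^ (α - (m * n : ℝ))) * (‖Ω y‖₊ : ℝ≥0∞) *
      ∏ i, (‖f i (x - y i)‖₊ : ℝ≥0∞)

/-- Standard dyadic cube `2^{-k}([0,1)^n + j)`. -/
def DyadicCube (n : ℕ) (k : ℤ) (j : Fin n → ℤ) : Set (En n) :=
  Cube n (fun i => (j i : ℝ) * (2:ℝ) ^ (-k)) ((2:ℝ) ^ (-k))

def IsDyadic (n : ℕ) (S : Set (En n)) : Prop := ∃ k j, S = DyadicCube n k j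

/-- The product of fractional averages `∏_i |S|^{α/(mn)-1} ∫_S |f_i|`. -/
def dyadAvg (m n : ℕ) (α : ℝ) (f : Fin m → En n → ℝ) (S : Set (En n)) : ℝ≥0∞ :=
  ∏ i, (volume S) ^ (α / (m * n : ℝ) - 1) * ∫⁻ y in S, (‖f i y‖₊ : ℝ≥0∞)

/-- Dyadic multilinear fractional maximal operator `M_α^d`. -/
def MFracDyadic (m n : ℕ) (α : ℝ) (f : Fin m → En n → ℝ) (x : En n) : ℝ≥0∞ :=
  ⨆ (k : ℤ) (j : Fin n → ℤ) (_ : x ∈ DyadicCube n k j), dyadAvg m n α f (DyadicCube n k j)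

/-- A maximal (Calderón–Zygmund) dyadic cube of the level set at height `t`. -/
def IsCZCube (m n : ℕ) (α : ℝ) (f : Fin m → En n → ℝ) (t : ℝ≥0∞) (S : Set (En n)) : Prop :=
  IsDyadic n S ∧ t < dyadAvg m n α f S ∧
    ∀ S', IsDyadic n S' → S ⊂ S' → ¬ t < dyadAvg m n α f S'

/-- The multiple weight constant `[ω]_{A_{P}}` of Lerner–Ombrosi–Pérez–Torres–Trujillo. -/
def ApVec (m n : ℕ) (p : Fin m → ℝ) (pp : ℝ) (ω : Fin m → En n → ℝ≥0∞) : ℝ≥0∞ :=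
  ⨆ (a : Fin n → ℝ) (h : ℝ) (_ : 0 < h),
    (∏ i, ((volume (Cube n a h))⁻¹ *
        ∫⁻ x in Cube n a h, ω i x ^ (1 - rconj (p i))) ^ (pp / rconj (p i))) *
      ((volume (Cube n a h))⁻¹ * ∫⁻ x in Cube n a h, ∏ i, ω i x ^ (pp / p i))

/-- `X`-average `‖g‖_{X,Q} = ‖τ_{ℓ(Q)}(g χ_Q)‖_X` of `g` over the cube `Q = Q(a,h)`,
for an abstract Banach-function-space norm functional `N`. -/
def Xavg (n : ℕ) (N : (En n → ℝ≥0∞) → ℝ≥0∞) (a : Fin n → ℝ) (h : ℝ)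
    (g : En n → ℝ≥0∞) : ℝ≥0∞ :=
  N (fun x => (Cube n a h).indicator g (h • x))

/-- Maximal operator `M_X` associated with the norm functional `N`. -/
def MX (n : ℕ) (N : (En n → ℝ≥0∞) → ℝ≥0∞) (g : En n → ℝ≥0∞) (x : En n) : ℝ≥0∞ :=
  ⨆ (a : Fin n → ℝ) (h : ℝ) (_ : 0 < h) (_ : x ∈ Cube n a h), Xavg n N a h g

/-- Weighted fractional maximal operator `M_{σ,α/m}`. -/
def MWFrac (n m : ℕ) (α : ℝ) (σ : En n → ℝ≥0∞) (f : En n → ℝ) (x : En n) : ℝ≥0∞ :=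
  ⨆ (a : Fin n → ℝ) (h : ℝ) (_ : 0 < h) (_ : x ∈ Cube n a h),
    (∫⁻ y in Cube n a h, σ y) ^ (α / (m * n : ℝ) - 1) *
      ∫⁻ y in Cube n a h, (‖f y‖₊ : ℝ≥0∞) * σ y

/-- The reverse Hölder exponent `r(w) = 1 + 1/(c_n [w]_{A_∞})`. -/
def rExp (n : ℕ) (A : ℝ) : ℝ := 1 + 1 / ((2:ℝ) ^ (11 + n) * A)

end

/-! Choose the scale `L = 2^{-k}` with `3h ≤ L ≤ 6h`. In each coordinate `[a, a + h)` has length at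
most `L/3`. If it is not contained in an interval of the grid `Lℤ`, it straddles a point `mL` with
`a > mL - L/3`, and then it lies in `[mL - L/3, mL + 2L/3)` as well as in `[mL - 2L/3, mL + L/3)`:
whichever of the two shifts by `± L/3` the grid `D_β` uses at this scale, one of these intervals
belongs to it. -/

theorem exists_shifted_unit_interval_superset {t δ ε : ℝ} (hδ : δ ≤ 1 / 3) (hε : ε = 1 ∨ ε = -1) :
    ∃ b : ℝ, (b = 0 ∨ b = 1 / 3) ∧
      ∃ j : ℤ, j + ε * b ≤ t ∧ t + δ ≤ j + ε * b + 1 := by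
  have hfloor := Int.floor_le t
  have hlt := Int.lt_floor_add_one t
  by_cases hfit : t + δ ≤ ⌊t⌋ + 1
  · exact ⟨0, .inl rfl, ⌊t⌋, by simpa using hfloor, by simpa using hfit⟩
  rcases hε with rfl | rfl
  · exact ⟨1 / 3, .inr rfl, ⌊t⌋, by linarith, by linarith⟩
  · exact ⟨1 / 3, .inr rfl, ⌊t⌋ + 1, by push_cast; linarith, by push_cast; linarith⟩

theorem exists_shifted_interval_superset {L a h ε : ℝ} (hL : 0 < L) (hh : 3 * h ≤ L)
    (hε : ε = 1 ∨ ε = -1) :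
    ∃ b : ℝ, (b = 0 ∨ b = 1 / 3) ∧
      ∃ j : ℤ, L * (j + ε * b) ≤ a ∧ a + h ≤ L * (j + ε * b) + L := by
  obtain ⟨b, hb, j, hlow, hhigh⟩ :=
    exists_shifted_unit_interval_superset (t := a / L) (δ := h / L)
      (by rw [div_le_iff₀ hL]; linarith) hε
  refine ⟨b, hb, j, ?_, ?_⟩
  · linarith [(le_div_iff₀ hL).mp hlow]
  · rw [← add_div, div_le_iff₀ hL] at hhigh
    linarith

theorem Cube_subset_Cube {n : ℕ} {a b : Fin n → ℝ} {h H : ℝ}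
    (hab : ∀ i, b i ≤ a i ∧ a i + h ≤ b i + H) : Cube n a h ⊆ Cube n b H :=
  fun _ hx i => ⟨(hab i).1.trans (hx i).1, (hx i).2.trans_le (hab i).2⟩

theorem exists_zpow_two_mem_Icc_two_mul {x : ℝ} (hx : 0 < x) :
    ∃ k : ℤ, x ≤ 2 ^ k ∧ (2 : ℝ) ^ k ≤ 2 * x := by
  obtain ⟨k, hlow, hhigh⟩ := exists_mem_Ioc_zpow hx one_lt_two
  refine ⟨k + 1, hhigh, ?_⟩
  rw [zpow_add_one₀ two_ne_zero]
  linarith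

/-- every axis-parallel cube is contained in a cube of one of the `2^n`
translated dyadic grids `D_β`, `β ∈ {0,1/3}^n`, with at most `6` times the side length. -/
theorem statement_0 (n : ℕ) (a : Fin n → ℝ) (h : ℝ) (hh : 0 < h) :
    ∃ β : Fin n → ℝ, (∀ i, β i = 0 ∨ β i = 1/3) ∧
      ∃ (k : ℤ) (j : Fin n → ℤ),
        Cube n a h ⊆ GridCube n β k j ∧ (2:ℝ) ^ (-k) ≤ 6 * h := by
  obtain ⟨c, hc_low, hc_high⟩ := exists_zpow_two_mem_Icc_two_mul (by positivity : 0 < 3 * h)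
  have hsign : (-1 : ℝ) ^ (-c) = 1 ∨ (-1 : ℝ) ^ (-c) = -1 := (-c).even_or_odd.imp
    Even.neg_one_zpow Odd.neg_one_zpow
  choose β hβ j hj using fun i =>
    exists_shifted_interval_superset (a := a i) (zpow_pos two_pos c) hc_low hsign
  refine ⟨β, hβ, -c, j, Cube_subset_Cube fun i => ?_, by rw [neg_neg]; linarith⟩
  simpa only [neg_neg] using hj i
end

section
/- Let 0 ≤ α < mn and let f₁,…,f_m be locally integrable on ℝⁿ. Then for every x ∈ ℝⁿ, M_α(f⃗)(x) ≤ 6^{mn−α} · Σ_{β ∈ {0,1/3}ⁿ} M_α^{D_β}(f⃗)(x), where M_α^{D_β} is the fractional maximal operator restricted to cubes of the dyadic grid D_β. -/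
open MeasureTheory ENNReal NNReal Set

/-!
Given a cube `Q` of side `h`, pick the dyadic length `ℓ = 2^{-k} ∈ (3h, 6h]`. In each coordinate
the points of the grids `ℓℤ` and `ℓ(ℤ ± 1/3)` are at least `ℓ/3 > h` apart, so the side of `Q`
contains no point of one of the two grids and therefore lies in a single cell of it. Choosing the
grid coordinatewise gives a cube `P ∈ D_β` with `Q ⊆ P` and `|P| ≤ 6ⁿ |Q|`; as the exponent
`α/(mn) - 1` is nonpositive, each factor of the average over `Q` is at most `6^{n - α/m}` times
the corresponding factor over `P`.
-/

lemma volume_cube (n : ℕ) (a : Fin n → ℝ) (h : ℝ) :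
    volume (Cube n a h) = ENNReal.ofReal h ^ n := by
  have hpi : Cube n a h = (MeasurableEquiv.toLp 2 (Fin n → ℝ)).symm ⁻¹'
      univ.pi fun i => Ico (a i) (a i + h) := by
    ext x
    simp [Cube, Set.mem_pi]
  rw [hpi, (EuclideanSpace.volume_preserving_symm_measurableEquiv_toLp (Fin n)).measure_preimage
    (MeasurableSet.univ_pi fun _ => measurableSet_Ico).nullMeasurableSet, volume_pi_pi]
  simp [Real.volume_Ico]

lemma volume_cube_le_of_le {n : ℕ} {a b : Fin n → ℝ} {h ℓ c : ℝ} (hc : 0 ≤ c)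
    (hℓ : ℓ ≤ c * h) : volume (Cube n b ℓ) ≤ ENNReal.ofReal c ^ n * volume (Cube n a h) := by
  rw [volume_cube, volume_cube, ← mul_pow, ← ENNReal.ofReal_mul hc]
  gcongr

lemma exists_zpow_two_mem_Ioc {r : ℝ} (hr : 0 < r) : ∃ k : ℤ, (2 : ℝ) ^ k ∈ Ioc r (2 * r) := by
  refine ⟨Int.log 2 (2 * r), ?_, ?_⟩
  · have h := Int.lt_zpow_succ_log_self (R := ℝ) (b := 2) one_lt_two (2 * r)
    simp only [Nat.cast_ofNat, zpow_add_one₀ (two_ne_zero' ℝ)] at h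
    linarith
  · exact_mod_cast Int.zpow_log_le_self (b := 2) one_lt_two (by positivity : 0 < 2 * r)

lemma exists_Ico_subset_or_mem_Ioo {ℓ : ℝ} (hℓ : 0 < ℓ) (s a h : ℝ) :
    (∃ j : ℤ, Ico a (a + h) ⊆ Ico (ℓ * (j + s)) (ℓ * (j + s) + ℓ)) ∨
      ∃ j : ℤ, ℓ * (j + s) ∈ Ioo a (a + h) := by
  set j := ⌊a / ℓ - s⌋
  have hj : ℓ * (j + s) ≤ a := by
    linarith [(le_div_iff₀ hℓ).1 (le_sub_iff_add_le.1 (Int.floor_le (a / ℓ - s)))]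
  have hj' : a < ℓ * (j + s) + ℓ := by
    linarith [(div_lt_iff₀ hℓ).1 (sub_lt_iff_lt_add.1 (Int.lt_floor_add_one (a / ℓ - s)))]
  by_cases hc : a + h ≤ ℓ * (j + s) + ℓ
  · exact .inl ⟨j, Ico_subset_Ico hj hc⟩
  · refine .inr ⟨j + 1, ?_, ?_⟩ <;> push_cast <;> linarith

lemma one_le_abs_three_mul_sub_neg_one_zpow (z k : ℤ) : 1 ≤ |3 * (z : ℝ) - (-1) ^ k| := by
  rcases Int.even_or_odd k with hk | hk
  · rw [hk.neg_one_zpow]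
    exact_mod_cast Int.one_le_abs (by omega : 3 * z - 1 ≠ 0)
  · rw [hk.neg_one_zpow]
    exact_mod_cast Int.one_le_abs (by omega : 3 * z - -1 ≠ 0)

lemma exists_Ico_subset_shifted_grid (k : ℤ) {a h : ℝ} (hk : 3 * h < 2 ^ (-k)) :
    ∃ (b : Bool) (j : ℤ), Ico a (a + h) ⊆
      Ico (2 ^ (-k) * (j + (-1) ^ k * if b then 1 / 3 else 0))
        (2 ^ (-k) * (j + (-1) ^ k * if b then 1 / 3 else 0) + 2 ^ (-k)) := by
  set ℓ : ℝ := 2 ^ (-k)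
  have hℓ : 0 < ℓ := by positivity
  rcases exists_Ico_subset_or_mem_Ioo hℓ 0 a h with ⟨j, hj⟩ | ⟨p, hp⟩
  · exact ⟨false, j, by simpa using hj⟩
  rcases exists_Ico_subset_or_mem_Ioo hℓ ((-1) ^ k * (1 / 3)) a h with ⟨j, hj⟩ | ⟨q, hq⟩
  · exact ⟨true, j, by simpa using hj⟩
  have hfar : ℓ / 3 ≤ |ℓ * (p + 0) - ℓ * (q + (-1) ^ k * (1 / 3))| := by
    have hsep := one_le_abs_three_mul_sub_neg_one_zpow (p - q) k
    rw [show ℓ * (p + 0) - ℓ * (q + (-1) ^ k * (1 / 3)) =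
      ℓ / 3 * (3 * ((p - q : ℤ) : ℝ) - (-1) ^ k) by push_cast; ring, abs_mul,
      abs_of_pos (by positivity)]
    exact le_mul_of_one_le_right (by positivity) hsep
  have hnear : |ℓ * (p + 0) - ℓ * (q + (-1) ^ k * (1 / 3))| < h :=
    abs_sub_lt_iff.2 ⟨by linarith [hp.2, hq.1], by linarith [hp.1, hq.2]⟩
  linarith

lemma exists_gridCube_superset {n : ℕ} (a : Fin n → ℝ) {h : ℝ} {k : ℤ} (hk : 3 * h < 2 ^ (-k)) :
    ∃ (b : Fin n → Bool) (j : Fin n → ℤ),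
      Cube n a h ⊆ GridCube n (fun i => if b i then (1 / 3 : ℝ) else 0) k j := by
  choose b j hbj using fun i => exists_Ico_subset_shifted_grid k (a := a i) hk
  exact ⟨b, j, fun y hy i => hbj i ⟨(hy i).1, (hy i).2⟩⟩

lemma ENNReal.rpow_neg_le_mul_rpow_neg {x y c : ℝ≥0∞} {s : ℝ} (hs : 0 ≤ s) (hx : x ≠ 0)
    (hc0 : c ≠ 0) (hc : c ≠ ⊤) (hy : y ≤ c * x) : x ^ (-s) ≤ c ^ s * y ^ (-s) :=
  calc x ^ (-s) = c ^ s * (c * x) ^ (-s) := by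
        rw [mul_rpow_of_ne_zero hc0 hx, ← mul_assoc, ← rpow_add _ _ hc0 hc, add_neg_cancel,
          rpow_zero, one_mul]
    _ ≤ c ^ s * y ^ (-s) := by
        rw [rpow_neg, rpow_neg]
        gcongr

lemma dyadAvg_le_of_subset {m n : ℕ} {α : ℝ} (hα : α ≤ m * n) (f : Fin m → En n → ℝ)
    {S T : Set (En n)} {c : ℝ≥0∞} (hc0 : c ≠ 0) (hc : c ≠ ⊤) (hST : S ⊆ T)
    (hS : volume S ≠ 0) (hT : volume T ≤ c * volume S) :
    dyadAvg m n α f S ≤ (c ^ (1 - α / (m * n : ℝ))) ^ m * dyadAvg m n α f T := by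
  have hs : 0 ≤ 1 - α / (m * n : ℝ) := sub_nonneg.2 (div_le_one_of_le₀ hα (by positivity))
  have hexp : α / (m * n : ℝ) - 1 = -(1 - α / (m * n : ℝ)) := by ring
  calc dyadAvg m n α f S
      ≤ ∏ i, c ^ (1 - α / (m * n : ℝ)) *
          (volume T ^ (α / (m * n : ℝ) - 1) * ∫⁻ y in T, (‖f i y‖₊ : ℝ≥0∞)) :=
        Finset.prod_le_prod' fun i _ => by
          rw [← mul_assoc, hexp]
          exact mul_le_mul' (ENNReal.rpow_neg_le_mul_rpow_neg hs hS hc0 hc hT)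
            (lintegral_mono_set hST)
    _ = (c ^ (1 - α / (m * n : ℝ))) ^ m * dyadAvg m n α f T := by
        rw [dyadAvg, Finset.prod_mul_distrib, Finset.prod_const, Finset.card_univ,
          Fintype.card_fin]

lemma ENNReal.pow_rpow_one_sub_div_pow {m n : ℕ} (hm : m ≠ 0) (hn : n ≠ 0) (x : ℝ≥0∞) (α : ℝ) :
    ((x ^ n) ^ (1 - α / (m * n : ℝ))) ^ m = x ^ ((m * n : ℝ) - α) := by
  rw [← rpow_natCast, ← rpow_natCast x, ← rpow_mul, ← rpow_mul]
  congr 1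
  field_simp

lemma dyadAvg_gridCube_le_mFracGrid {m n : ℕ} {α : ℝ} {β : Fin n → ℝ} {k : ℤ} {j : Fin n → ℤ}
    (f : Fin m → En n → ℝ) {x : En n} (hx : x ∈ GridCube n β k j) :
    dyadAvg m n α f (GridCube n β k j) ≤ MFracGrid m n α β f x :=
  le_iSup₂_of_le k j (le_iSup_of_le hx le_rfl)

theorem statement_1_general (m n : ℕ) (hm : 0 < m) (hn : 0 < n) (α : ℝ)
    (hα : α < m * n) (f : Fin m → En n → ℝ) (x : En n) :
    MFrac m n α f x ≤ (6 : ℝ≥0∞) ^ ((m * n : ℝ) - α) *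
      ∑ b : Fin n → Bool,
        MFracGrid m n α (fun i => if b i then (1/3 : ℝ) else 0) f x := by
  refine iSup₂_le fun a h => iSup₂_le fun hh hx => ?_
  obtain ⟨k, hk3, hk6⟩ := exists_zpow_two_mem_Ioc (by positivity : 0 < 3 * h)
  obtain ⟨b, j, hQP⟩ := exists_gridCube_superset a (k := -k) (by rwa [neg_neg])
  set P := GridCube n (fun i => if b i then (1 / 3 : ℝ) else 0) (-k) j
  have hvol : volume P ≤ 6 ^ n * volume (Cube n a h) := by
    rw [← ENNReal.ofReal_ofNat 6]
    exact volume_cube_le_of_le (by norm_num) (by rw [neg_neg]; linarith)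
  calc dyadAvg m n α f (Cube n a h)
      ≤ (((6 : ℝ≥0∞) ^ n) ^ (1 - α / (m * n : ℝ))) ^ m * dyadAvg m n α f P :=
        dyadAvg_le_of_subset hα.le f (by simp) (by simp) hQP
          (by simp [volume_cube, hh, hn.ne']) hvol
    _ ≤ (6 : ℝ≥0∞) ^ ((m * n : ℝ) - α) *
          MFracGrid m n α (fun i => if b i then (1 / 3 : ℝ) else 0) f x := by
        rw [ENNReal.pow_rpow_one_sub_div_pow hm.ne' hn.ne']
        gcongr
        exact dyadAvg_gridCube_le_mFracGrid f (hQP hx)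
    _ ≤ _ := by
        gcongr
        exact Finset.single_le_sum_of_canonicallyOrdered (M := ℝ≥0∞) (Finset.mem_univ b)

/-- pointwise domination of `M_α` by the sum of the `2^n` grid maximal
operators `M_α^{D_β}`, `β ∈ {0,1/3}^n`, with constant `6^{mn-α}`. -/
theorem statement_1 (m n : ℕ) (hm : 0 < m) (hn : 0 < n) (α : ℝ) (hα0 : 0 ≤ α)
    (hα : α < m * n) (f : Fin m → En n → ℝ)
    (hf : ∀ i, MeasureTheory.LocallyIntegrable (f i) volume) (x : En n) :
    MFrac m n α f x ≤ (6 : ℝ≥0∞) ^ ((m * n : ℝ) - α) *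
      ∑ b : Fin n → Bool,
        MFracGrid m n α (fun i => if b i then (1/3 : ℝ) else 0) f x :=
  statement_1_general m n hm hn α hα f x
end

section
/- Let n = 1, 0 < ε < 1, 1 < p_i < ∞, 1/p = Σ 1/p_i, 0 < α < m, 1/m < p < 1/α, 1/q = 1/p − α. Set ω_i(x) = |x|^{(1−ε)(1−1/p_i)} and f_i(x) = x^{−1+ε} χ_{(0,1)}(x) for i = 1,…,m. Then [ω⃗]_{A_{(P⃗,q)}} ≈ (1/ε)^{q(m − 1/p)}, ∏_{i=1}^m ‖f_i‖_{L^{p_i}(ω_i^{p_i})} = (1/ε)^{1/p} (up to constants independent of ε), and ‖M_α(f⃗)‖_{L^q(ν_ω⃗^q)} ≥ c (1/ε)^{m + 1/q}. Consequently, any exponent γ for which ‖M_α(f⃗)‖_{L^q(ν_ω⃗^q)} ≤ C[ω⃗]_{A_{(P⃗,q)}}^γ ∏‖f_i‖_{L^{p_i}(ω_i^{p_i})} holds for all weights and functions must satisfy γ ≥ (mp/(q(mp−1)))(1 − α/m). -/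
open MeasureTheory ENNReal NNReal Set

/-- The example weights `ω_i(x) = |x|^{(1-ε)(1-1/p_i)}` on `ℝ`. -/
noncomputable def exW (m : ℕ) (p : Fin m → ℝ) (ε : ℝ) : Fin m → En 1 → ℝ≥0∞ :=
  fun i x => ENNReal.ofReal (|x 0| ^ ((1 - ε) * (1 - 1/(p i))))

/-- The example functions `f_i(x) = x^{-1+ε} χ_{(0,1)}(x)` on `ℝ`. -/
noncomputable def exF (m : ℕ) (ε : ℝ) : Fin m → En 1 → ℝ :=
  fun _ x => if 0 < x 0 ∧ x 0 < 1 then (x 0) ^ (-1 + ε) else 0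


/-!
On `ℝ` everything reduces to integrals of powers of `|t|`. Put `s = ∑ᵢ (1 - 1/pᵢ) = m - 1/p`.
Then `ν^q = |t|^{q(1-ε)s}` and `ωᵢ^{-pᵢ'} = |t|^{ε-1}` for every `i`, so the `A_{(P⃗,q)}` term of
an interval `I` is `⟨|t|^{q(1-ε)s}⟩_I ⟨|t|^{ε-1}⟩_I^{qs}`. With `b = sup_I |t|` the first average
is at most `b^{q(1-ε)s}` and the second at most `(4/ε) b^{ε-1}`; the powers of `b` cancel, so
`[ω⃗] ≲ ε^{-qs}`, and `I = [0,1)` gives the matching lower bound. The norms are exact, since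
`|fᵢ|^{pᵢ} ωᵢ^{pᵢ} = t^{ε-1}` on `(0,1)`. For `0 < t < 1` the interval `[0,2t)` gives
`M_α f⃗(t) ≥ 2^{α-m} ε^{-m} t^{α-m+mε}`, and integrating against `ν^q` leaves
`∫₀¹ t^{qε/p-1} dt = p/(qε)`. Letting `ε → 0` in the assumed inequality and comparing powers of
`1/ε` gives `m + 1/q ≤ qsγ + 1/p`, which is the bound on `γ`.
-/

lemma measurePreserving_apply_zero :
    MeasurePreserving (fun x : En 1 => x 0) volume volume :=
  (EuclideanSpace.volume_preserving_symm_measurableEquiv_toLp (Fin 1)).trans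
    (volume_preserving_funUnique (Fin 1) ℝ)

lemma measurableEmbedding_apply_zero : MeasurableEmbedding (fun x : En 1 => x 0) :=
  ((MeasurableEquiv.toLp 2 (Fin 1 → ℝ)).symm.trans
    (MeasurableEquiv.funUnique (Fin 1) ℝ)).measurableEmbedding

lemma lintegral_comp_apply_zero (g : ℝ → ℝ≥0∞) : ∫⁻ x : En 1, g (x 0) = ∫⁻ t, g t :=
  measurePreserving_apply_zero.lintegral_comp_emb measurableEmbedding_apply_zero g

lemma cube_one_eq_preimage (a : Fin 1 → ℝ) (h : ℝ) :
    Cube 1 a h = (fun x : En 1 => x 0) ⁻¹' Ico (a 0) (a 0 + h) := by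
  ext x
  simp [Cube, Fin.forall_fin_one]

lemma volume_cube_one (a : Fin 1 → ℝ) (h : ℝ) : volume (Cube 1 a h) = ENNReal.ofReal h := by
  rw [cube_one_eq_preimage, measurePreserving_apply_zero.measure_preimage
    measurableSet_Ico.nullMeasurableSet, Real.volume_Ico, add_sub_cancel_left]

lemma setLIntegral_cube_one (a : Fin 1 → ℝ) (h : ℝ) (g : ℝ → ℝ≥0∞) :
    ∫⁻ x in Cube 1 a h, g (x 0) = ∫⁻ t in Ico (a 0) (a 0 + h), g t := by
  rw [cube_one_eq_preimage]
  exact measurePreserving_apply_zero.setLIntegral_comp_preimage_emb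
    measurableEmbedding_apply_zero g _

lemma inv_volume_mul_setLIntegral_cube_one (a : Fin 1 → ℝ) (h : ℝ) (g : ℝ → ℝ≥0∞) :
    (volume (Cube 1 a h))⁻¹ * ∫⁻ x in Cube 1 a h, g (x 0) =
      ⨍⁻ t in Ico (a 0) (a 0 + h), g t ∂volume := by
  rw [setLAverage_eq, setLIntegral_cube_one, volume_cube_one, Real.volume_Ico,
    add_sub_cancel_left, ENNReal.div_eq_inv_mul]

lemma lintegral_Ioo_rpow {β c : ℝ} (hβ : -1 < β) (hc : 0 ≤ c) :
    ∫⁻ t in Ioo 0 c, ENNReal.ofReal (t ^ β) = ENNReal.ofReal (c ^ (β + 1) / (β + 1)) := by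
  have hint : IntegrableOn (fun t : ℝ => t ^ β) (Ioc 0 c) := by
    simpa [intervalIntegrable_iff, uIoc_of_le hc, IntegrableOn] using
      intervalIntegral.intervalIntegrable_rpow' (a := 0) (b := c) hβ
  rw [Measure.restrict_congr_set Ioo_ae_eq_Ioc, ← ofReal_integral_eq_lintegral_ofReal hint
    ((ae_restrict_mem measurableSet_Ioc).mono fun t ht => Real.rpow_nonneg ht.1.le _),
    ← intervalIntegral.integral_of_le hc, integral_rpow (Or.inl hβ),
    Real.zero_rpow (by linarith), sub_zero]

lemma setLIntegral_Icc_comp_abs_le (g : ℝ → ℝ≥0∞) (c : ℝ) :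
    ∫⁻ t in Icc (-c) c, g |t| ≤ 2 * ∫⁻ t in Ioo 0 c, g t := by
  have hpos : ∫⁻ t in Icc 0 c, g |t| = ∫⁻ t in Ioo 0 c, g t := by
    rw [Measure.restrict_congr_set Ioo_ae_eq_Icc.symm]
    exact setLIntegral_congr_fun measurableSet_Ioo fun t ht => by rw [abs_of_pos ht.1]
  have hneg : ∫⁻ t in Icc (-c) 0, g |t| = ∫⁻ t in Icc 0 c, g |t| := by
    have := (Measure.measurePreserving_neg (volume : Measure ℝ)).setLIntegral_comp_preimage_emb
      (MeasurableEquiv.neg ℝ).measurableEmbedding (fun t => g |t|) (Icc 0 c)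
    simpa [abs_neg] using this
  calc ∫⁻ t in Icc (-c) c, g |t|
      ≤ ∫⁻ t in Icc (-c) 0 ∪ Icc 0 c, g |t| :=
        lintegral_mono_set fun t ht => (le_total t 0).imp (⟨ht.1, ·⟩) (⟨·, ht.2⟩)
    _ ≤ (∫⁻ t in Icc (-c) 0, g |t|) + ∫⁻ t in Icc 0 c, g |t| := lintegral_union_le _ _ _
    _ = 2 * ∫⁻ t in Ioo 0 c, g t := by rw [hneg, hpos, two_mul]

lemma abs_le_max_of_mem_Ico {A h t : ℝ} (ht : t ∈ Ico A (A + h)) : |t| ≤ max |A| |A + h| :=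
  abs_le_max_abs_abs ht.1 ht.2.le

lemma max_sub_le_abs_of_mem_Ico {A h t : ℝ} (ht : t ∈ Ico A (A + h)) :
    max |A| |A + h| - h ≤ |t| := by
  have hA : |A - t| ≤ h := abs_le.2 ⟨by linarith [ht.2], by linarith [ht.1, ht.2]⟩
  have hAh : |A + h - t| ≤ h := abs_le.2 ⟨by linarith [ht.1, ht.2], by linarith [ht.1]⟩
  rw [sub_le_iff_le_add]
  exact max_le (by linarith [abs_sub_abs_le_abs_sub A t])
    (by linarith [abs_sub_abs_le_abs_sub (A + h) t])

lemma half_le_max_abs (A h : ℝ) : h / 2 ≤ max |A| |A + h| := by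
  linarith [le_max_left |A| |A + h|, le_max_right |A| |A + h|, le_abs_self (A + h), neg_abs_le A]

lemma setLAverage_Ico_le {A h : ℝ} {c : ℝ≥0∞} {g : ℝ → ℝ≥0∞}
    (hg : ∫⁻ t in Ico A (A + h), g t ≤ ENNReal.ofReal h * c) :
    ⨍⁻ t in Ico A (A + h), g t ∂volume ≤ c := by
  rw [setLAverage_eq, Real.volume_Ico, add_sub_cancel_left]
  exact ENNReal.div_le_of_le_mul' hg

lemma setLAverage_Ico_abs_rpow_le_of_nonneg {β : ℝ} (hβ : 0 ≤ β) (A h : ℝ) :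
    ⨍⁻ t in Ico A (A + h), ENNReal.ofReal (|t| ^ β) ∂volume ≤
      ENNReal.ofReal (max |A| |A + h| ^ β) := by
  refine setLAverage_Ico_le ?_
  calc ∫⁻ t in Ico A (A + h), ENNReal.ofReal (|t| ^ β)
      ≤ ∫⁻ _ in Ico A (A + h), ENNReal.ofReal (max |A| |A + h| ^ β) :=
        setLIntegral_mono measurable_const fun t ht => ENNReal.ofReal_le_ofReal <|
          Real.rpow_le_rpow (abs_nonneg t) (abs_le_max_of_mem_Ico ht) hβ
    _ = _ := by rw [setLIntegral_const, Real.volume_Ico, add_sub_cancel_left, mul_comm]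

/-- If the interval is short compared with `b = max |A| |A + h|`, then `|t| ≥ b/2` on it;
otherwise it lies in `[-b, b]` with `b ≤ 2h`, and `∫_{-b}^{b} |t|^β = 2b^{β+1}/(β+1)`. -/
lemma setLAverage_Ico_abs_rpow_le_of_nonpos {β : ℝ} (hβ : -1 < β) (hβ0 : β ≤ 0) (A : ℝ)
    {h : ℝ} (hh : 0 < h) :
    ⨍⁻ t in Ico A (A + h), ENNReal.ofReal (|t| ^ β) ∂volume ≤
      ENNReal.ofReal (4 / (β + 1) * max |A| |A + h| ^ β) := by
  set b := max |A| |A + h|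
  have hb : 0 < b := by linarith [half_le_max_abs A h]
  have hβ1 : 0 < β + 1 := by linarith
  refine setLAverage_Ico_le ?_
  rw [← ENNReal.ofReal_mul hh.le]
  rcases le_or_gt b (2 * h) with hnear | hfar
  · calc ∫⁻ t in Ico A (A + h), ENNReal.ofReal (|t| ^ β)
        ≤ ∫⁻ t in Icc (-b) b, ENNReal.ofReal (|t| ^ β) :=
          lintegral_mono_set fun t ht => abs_le.1 (abs_le_max_of_mem_Ico ht)
      _ ≤ 2 * ∫⁻ t in Ioo 0 b, ENNReal.ofReal (t ^ β) :=
          setLIntegral_Icc_comp_abs_le (fun t => ENNReal.ofReal (t ^ β)) b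
      _ = ENNReal.ofReal (2 * b / (β + 1) * b ^ β) := by
          rw [lintegral_Ioo_rpow hβ hb.le, ← ENNReal.ofReal_ofNat 2,
            ← ENNReal.ofReal_mul zero_le_two, Real.rpow_add_one hb.ne']
          ring_nf
      _ ≤ ENNReal.ofReal (h * (4 / (β + 1) * b ^ β)) := by
          gcongr ENNReal.ofReal ?_
          rw [← mul_assoc, mul_div_assoc', mul_comm h 4]
          exact mul_le_mul_of_nonneg_right
            (div_le_div_of_nonneg_right (by linarith) hβ1.le) (by positivity)
  · have hbound : ∀ t ∈ Ico A (A + h), ENNReal.ofReal (|t| ^ β) ≤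
        ENNReal.ofReal ((b / 2) ^ β) := fun t ht => ENNReal.ofReal_le_ofReal <|
      Real.rpow_le_rpow_of_nonpos (by positivity)
        (by linarith [max_sub_le_abs_of_mem_Ico ht]) hβ0
    have hhalf : (b / 2) ^ β ≤ 4 / (β + 1) * b ^ β := by
      rw [Real.div_rpow hb.le zero_le_two, div_eq_mul_inv, mul_comm, ← Real.rpow_neg zero_le_two]
      gcongr
      calc (2 : ℝ) ^ (-β) ≤ 2 ^ (1 : ℝ) :=
            Real.rpow_le_rpow_of_exponent_le one_le_two (by linarith)
        _ ≤ 4 / (β + 1) := by rw [Real.rpow_one, le_div_iff₀ hβ1]; linarith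
    calc ∫⁻ t in Ico A (A + h), ENNReal.ofReal (|t| ^ β)
        ≤ ∫⁻ _ in Ico A (A + h), ENNReal.ofReal ((b / 2) ^ β) :=
          setLIntegral_mono measurable_const hbound
      _ = ENNReal.ofReal (h * (b / 2) ^ β) := by
          rw [setLIntegral_const, Real.volume_Ico, add_sub_cancel_left, mul_comm,
            ENNReal.ofReal_mul hh.le]
      _ ≤ ENNReal.ofReal (h * (4 / (β + 1) * b ^ β)) := by gcongr

lemma setLAverage_Ico_zero_one_abs_rpow {β : ℝ} (hβ : -1 < β) :
    ⨍⁻ t in Ico 0 1, ENNReal.ofReal (|t| ^ β) ∂volume = ENNReal.ofReal (1 / (β + 1)) := by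
  rw [setLAverage_eq, Real.volume_Ico, sub_zero, ENNReal.ofReal_one, div_one,
    Measure.restrict_congr_set Ioo_ae_eq_Ico.symm,
    setLIntegral_congr_fun measurableSet_Ioo fun t ht => by rw [abs_of_pos ht.1],
    lintegral_Ioo_rpow hβ zero_le_one, Real.one_rpow]

lemma ENNReal.prod_rpow_eq_rpow_sum {ι : Type*} (s : Finset ι) (x : ℝ≥0∞) {c : ι → ℝ}
    (hc : ∀ i ∈ s, 0 ≤ c i) : ∏ i ∈ s, x ^ c i = x ^ ∑ i ∈ s, c i := by
  classical
  induction s using Finset.induction_on with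
  | empty => simp
  | insert j s hj ih =>
    have hc' : ∀ i ∈ s, 0 ≤ c i := fun i hi => hc i (Finset.mem_insert_of_mem hi)
    rw [Finset.prod_insert hj, Finset.sum_insert hj, ih hc', ENNReal.rpow_add_of_nonneg _ _
      (hc j (Finset.mem_insert_self j s)) (Finset.sum_nonneg hc')]

lemma ENNReal.rpow_le_rpow_of_nonpos {x y : ℝ≥0∞} {z : ℝ} (hxy : x ≤ y) (hz : z ≤ 0) :
    y ^ z ≤ x ^ z := by
  rw [← neg_neg z, ENNReal.rpow_neg y, ENNReal.rpow_neg x]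
  exact ENNReal.inv_le_inv.2 (ENNReal.rpow_le_rpow hxy (neg_nonneg.2 hz))

lemma ENNReal.rpow_le_max_mul_rpow {x y : ℝ≥0∞} {c₁ c₂ : ℝ≥0} (hc₁ : c₁ ≠ 0) (hx : x ≠ ⊤)
    (h₁ : c₁ * x ≤ y) (h₂ : y ≤ c₂ * x) (γ : ℝ) :
    y ^ γ ≤ (max (c₁ ^ γ) (c₂ ^ γ) : ℝ≥0) * x ^ γ := by
  rcases le_total 0 γ with hγ | hγ
  · calc y ^ γ ≤ (c₂ * x) ^ γ := ENNReal.rpow_le_rpow h₂ hγ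
      _ = (c₂ ^ γ : ℝ≥0) * x ^ γ := by
        rw [ENNReal.mul_rpow_of_nonneg _ _ hγ, ENNReal.coe_rpow_of_nonneg _ hγ]
      _ ≤ _ := by gcongr; exact le_max_right _ _
  · calc y ^ γ ≤ (c₁ * x) ^ γ := ENNReal.rpow_le_rpow_of_nonpos h₁ hγ
      _ = (c₁ ^ γ : ℝ≥0) * x ^ γ := by
        rw [ENNReal.mul_rpow_of_ne_top ENNReal.coe_ne_top hx, ENNReal.coe_rpow_of_ne_zero hc₁]
      _ ≤ _ := by gcongr; exact le_max_left _ _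

open Filter Topology in
lemma le_of_forall_mul_rpow_le {a b : ℝ} {c K : ℝ≥0} (hc : c ≠ 0)
    (h : ∀ ε : ℝ, 0 < ε → ε < 1 →
      (c : ℝ≥0∞) * ENNReal.ofReal (1 / ε) ^ a ≤ K * ENNReal.ofReal (1 / ε) ^ b) :
    a ≤ b := by
  by_contra! hab
  have hbound : ∀ ε : ℝ, 0 < ε → ε < 1 → (1 / ε) ^ (a - b) ≤ K / c := by
    intro ε hε hε1
    have hu : 0 < 1 / ε := by positivity
    have := h ε hε hε1
    rw [ENNReal.ofReal_rpow_of_pos hu, ENNReal.ofReal_rpow_of_pos hu,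
      ← ENNReal.ofReal_coe_nnreal, ← ENNReal.ofReal_coe_nnreal (p := K),
      ← ENNReal.ofReal_mul c.coe_nonneg, ← ENNReal.ofReal_mul K.coe_nonneg,
      ENNReal.ofReal_le_ofReal_iff (by positivity)] at this
    rw [Real.rpow_sub hu, div_le_div_iff₀ (by positivity) (by positivity)]
    linarith
  have hlim : Tendsto (fun ε : ℝ => (1 / ε) ^ (a - b)) (𝓝[>] 0) atTop := by
    simpa only [one_div, Function.comp_def] using
      (_root_.tendsto_rpow_atTop (sub_pos.2 hab)).comp tendsto_inv_nhdsGT_zero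
  obtain ⟨ε, hlarge, hε⟩ :=
    ((hlim.eventually_gt_atTop ((K : ℝ) / c)).and (Ioo_mem_nhdsGT one_pos)).exists
  exact (hbound ε hε.1 hε.2).not_gt hlarge

lemma le_mul_add_of_forall_rpow_bounds {a b d γ : ℝ} {c₁ c₂ c₃ C : ℝ≥0} (hc₁ : c₁ ≠ 0)
    (hc₃ : c₃ ≠ 0) {A N L : ℝ → ℝ≥0∞}
    (hA : ∀ ε : ℝ, 0 < ε → ε < 1 →
      (c₁ : ℝ≥0∞) * ENNReal.ofReal (1 / ε) ^ a ≤ A ε ∧ A ε ≤ c₂ * ENNReal.ofReal (1 / ε) ^ a)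
    (hN : ∀ ε : ℝ, 0 < ε → ε < 1 → N ε = ENNReal.ofReal (1 / ε) ^ b)
    (hL : ∀ ε : ℝ, 0 < ε → ε < 1 → (c₃ : ℝ≥0∞) * ENNReal.ofReal (1 / ε) ^ d ≤ L ε)
    (hLAN : ∀ ε : ℝ, 0 < ε → ε < 1 → L ε ≤ C * A ε ^ γ * N ε) :
    d ≤ a * γ + b := by
  refine le_of_forall_mul_rpow_le (K := C * max (c₁ ^ γ) (c₂ ^ γ)) hc₃ fun ε hε hε1 => ?_
  have hE₀ : ENNReal.ofReal (1 / ε) ≠ 0 := by simpa using hε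
  calc (c₃ : ℝ≥0∞) * ENNReal.ofReal (1 / ε) ^ d
      ≤ C * A ε ^ γ * N ε := (hL ε hε hε1).trans (hLAN ε hε hε1)
    _ ≤ C * ((max (c₁ ^ γ) (c₂ ^ γ) : ℝ≥0) * (ENNReal.ofReal (1 / ε) ^ a) ^ γ) *
          ENNReal.ofReal (1 / ε) ^ b := by
        rw [hN ε hε hε1]
        gcongr
        exact ENNReal.rpow_le_max_mul_rpow hc₁ (ENNReal.rpow_ne_top_of_ne_zero hE₀
          ENNReal.ofReal_ne_top) (hA ε hε hε1).1 (hA ε hε hε1).2 γ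
    _ = _ := by
        rw [← ENNReal.rpow_mul, ENNReal.rpow_add _ _ hE₀ ENNReal.ofReal_ne_top,
          ENNReal.coe_mul]
        ring

lemma div_rconj {r : ℝ} (hr : 1 < r) (q : ℝ) : q / rconj r = q * (1 - 1 / r) := by
  have : r - 1 ≠ 0 := by linarith
  unfold rconj
  field_simp

lemma ofReal_abs_rpow_rpow_neg_rconj {r : ℝ} (hr : 1 < r) (c : ℝ) {t : ℝ} (ht : t ≠ 0) :
    ENNReal.ofReal (|t| ^ (c * (1 - 1 / r))) ^ (-rconj r) = ENNReal.ofReal (|t| ^ (-c)) := by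
  have : r - 1 ≠ 0 := by linarith
  rw [ENNReal.ofReal_rpow_of_pos (by positivity), ← Real.rpow_mul (abs_nonneg t)]
  unfold rconj
  field_simp

lemma one_sub_one_div_nonneg {r : ℝ} (hr : 1 < r) : 0 ≤ 1 - 1 / r :=
  sub_nonneg.2 ((div_le_one (by linarith)).2 hr.le)

section Example

variable {m : ℕ} {p : Fin m → ℝ} {ε α pp q s : ℝ}

lemma prod_exW_rpow (hp : ∀ i, 1 < p i) (hε1 : ε < 1) (hq : 0 ≤ q)
    (hs : ∑ i, (1 - 1 / p i) = s) (x : En 1) :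
    (∏ i, exW m p ε i x) ^ q = ENNReal.ofReal (|x 0| ^ (q * ((1 - ε) * s))) := by
  have hexp : ∀ i ∈ Finset.univ, 0 ≤ (1 - ε) * (1 - 1 / p i) := fun i _ =>
    mul_nonneg (by linarith) (one_sub_one_div_nonneg (hp i))
  simp only [exW]
  rw [← ENNReal.ofReal_prod_of_nonneg fun i _ => Real.rpow_nonneg (abs_nonneg _) _,
    ← Real.rpow_sum_of_nonneg (abs_nonneg _) hexp, ← Finset.mul_sum, hs,
    ENNReal.ofReal_rpow_of_nonneg (Real.rpow_nonneg (abs_nonneg _) _) hq,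
    ← Real.rpow_mul (abs_nonneg _), mul_comm]

lemma Apq_term_exW (hp : ∀ i, 1 < p i) (hε1 : ε < 1) (hq : 0 ≤ q)
    (hs : ∑ i, (1 - 1 / p i) = s) (a : Fin 1 → ℝ) (h : ℝ) :
    ((volume (Cube 1 a h))⁻¹ * ∫⁻ x in Cube 1 a h, (∏ i, exW m p ε i x) ^ q) *
        ∏ i, ((volume (Cube 1 a h))⁻¹ *
          ∫⁻ x in Cube 1 a h, exW m p ε i x ^ (-(rconj (p i)))) ^ (q / rconj (p i)) =
      (⨍⁻ t in Ico (a 0) (a 0 + h), ENNReal.ofReal (|t| ^ (q * ((1 - ε) * s))) ∂volume) *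
        (⨍⁻ t in Ico (a 0) (a 0 + h), ENNReal.ofReal (|t| ^ (ε - 1)) ∂volume) ^ (q * s) := by
  have hnum : (volume (Cube 1 a h))⁻¹ * ∫⁻ x in Cube 1 a h, (∏ i, exW m p ε i x) ^ q =
      ⨍⁻ t in Ico (a 0) (a 0 + h), ENNReal.ofReal (|t| ^ (q * ((1 - ε) * s))) ∂volume := by
    simp_rw [prod_exW_rpow hp hε1 hq hs]
    exact inv_volume_mul_setLIntegral_cube_one a h fun t => ENNReal.ofReal (|t| ^ _)
  have hden : ∀ i, (volume (Cube 1 a h))⁻¹ *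
      ∫⁻ x in Cube 1 a h, exW m p ε i x ^ (-(rconj (p i))) =
        ⨍⁻ t in Ico (a 0) (a 0 + h), ENNReal.ofReal (|t| ^ (ε - 1)) ∂volume := by
    intro i
    refine (inv_volume_mul_setLIntegral_cube_one a h
      (fun t => ENNReal.ofReal (|t| ^ ((1 - ε) * (1 - 1 / p i))) ^ (-(rconj (p i))))).trans
      (setLAverage_congr_fun_ae measurableSet_Ico ?_)
    -- only a.e.: at `t = 0` the left side is `0 ^ (-rconj (p i)) = ⊤`
    filter_upwards [Measure.ae_ne volume 0] with t ht _
    rw [ofReal_abs_rpow_rpow_neg_rconj (hp i) _ ht, neg_sub]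
  simp_rw [hnum, hden, div_rconj (hp _)]
  rw [ENNReal.prod_rpow_eq_rpow_sum _ _
    fun i _ => mul_nonneg hq (one_sub_one_div_nonneg (hp i)), ← Finset.mul_sum, hs]

lemma Apq_exW_ge (hp : ∀ i, 1 < p i) (hε : 0 < ε) (hε1 : ε < 1) (hq : 0 ≤ q)
    (hs : ∑ i, (1 - 1 / p i) = s) (hs0 : 0 ≤ s) :
    ENNReal.ofReal (1 / (q * s + 1)) * ENNReal.ofReal (1 / ε) ^ (q * s) ≤
      Apq m 1 p q (exW m p ε) := by
  refine le_trans ?_ (le_iSup₂_of_le (fun _ => 0) 1 (le_iSup_of_le one_pos le_rfl))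
  rw [Apq_term_exW hp hε1 hq hs, zero_add,
    setLAverage_Ico_zero_one_abs_rpow (by nlinarith [mul_nonneg hq hs0]),
    setLAverage_Ico_zero_one_abs_rpow (by linarith), sub_add_cancel]
  gcongr
  nlinarith [mul_nonneg hq hs0]

lemma Apq_exW_le (hp : ∀ i, 1 < p i) (hε : 0 < ε) (hε1 : ε < 1) (hq : 0 ≤ q)
    (hs : ∑ i, (1 - 1 / p i) = s) (hs0 : 0 ≤ s) :
    Apq m 1 p q (exW m p ε) ≤
      ENNReal.ofReal (4 ^ (q * s)) * ENNReal.ofReal (1 / ε) ^ (q * s) := by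
  refine iSup₂_le fun a h => iSup_le fun hh => ?_
  rw [Apq_term_exW hp hε1 hq hs]
  set b := max |a 0| |a 0 + h|
  have hb : 0 < b := by linarith [half_le_max_abs (a 0) h]
  calc _ ≤ ENNReal.ofReal (b ^ (q * ((1 - ε) * s))) *
        ENNReal.ofReal (4 / (ε - 1 + 1) * b ^ (ε - 1)) ^ (q * s) := by
        gcongr
        · exact setLAverage_Ico_abs_rpow_le_of_nonneg
            (mul_nonneg hq (mul_nonneg (by linarith) hs0)) _ _
        · exact setLAverage_Ico_abs_rpow_le_of_nonpos (by linarith) (by linarith) _ hh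
    _ = ENNReal.ofReal (4 ^ (q * s)) * ENNReal.ofReal (1 / ε) ^ (q * s) := by
        rw [sub_add_cancel, ENNReal.ofReal_rpow_of_pos (by positivity),
          ENNReal.ofReal_rpow_of_pos (by positivity), ← ENNReal.ofReal_mul (by positivity),
          ← ENNReal.ofReal_mul (by positivity), Real.mul_rpow (by positivity) (by positivity),
          ← Real.rpow_mul hb.le, div_eq_mul_one_div 4 ε,
          Real.mul_rpow zero_le_four (by positivity)]
        congr 1
        have hcancel : b ^ (q * ((1 - ε) * s)) * b ^ ((ε - 1) * (q * s)) = 1 := by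
          rw [← Real.rpow_add hb, ← Real.rpow_zero b]; ring_nf
        linear_combination (4 ^ (q * s) * (1 / ε) ^ (q * s)) * hcancel

lemma wnorm_exF (hε : 0 < ε) (i : Fin m) (hp : 1 < p i) :
    wnorm 1 (p i) (fun x => exW m p ε i x ^ (p i)) (fun x => (‖exF m ε i x‖₊ : ℝ≥0∞)) =
      ENNReal.ofReal (1 / ε) ^ (1 / p i) := by
  have hp0 : 0 < p i := by linarith
  have hintegrand : ∀ x : En 1, (‖exF m ε i x‖₊ : ℝ≥0∞) ^ p i * exW m p ε i x ^ p i =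
      (Ioo 0 1).indicator (fun t => ENNReal.ofReal (t ^ (-1 + ε))) (x 0) := by
    intro x
    by_cases hx : x 0 ∈ Ioo 0 1
    · have h0 := hx.1
      rw [indicator_of_mem hx, exF, exW, if_pos (mem_Ioo.1 hx), ← enorm_eq_nnnorm,
        Real.enorm_eq_ofReal (Real.rpow_nonneg h0.le _), abs_of_pos h0,
        ENNReal.ofReal_rpow_of_pos (by positivity), ENNReal.ofReal_rpow_of_pos (by positivity),
        ← Real.rpow_mul h0.le, ← Real.rpow_mul h0.le,
        ← ENNReal.ofReal_mul (by positivity), ← Real.rpow_add h0]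
      congr 2
      field_simp
      ring
    · rw [indicator_of_notMem hx, exF, if_neg (mt mem_Ioo.2 hx), nnnorm_zero, ENNReal.coe_zero,
        ENNReal.zero_rpow_of_pos hp0, zero_mul]
  rw [wnorm]
  simp_rw [hintegrand]
  rw [lintegral_comp_apply_zero
      fun t => (Ioo 0 1).indicator (fun t => ENNReal.ofReal (t ^ (-1 + ε))) t,
    lintegral_indicator measurableSet_Ioo, lintegral_Ioo_rpow (by linarith) zero_le_one,
    Real.one_rpow, neg_add_cancel_comm]

lemma prod_wnorm_exF (hp : ∀ i, 1 < p i) (hε : 0 < ε) (hpp : 1 / pp = ∑ i, 1 / p i) :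
    ∏ i, wnorm 1 (p i) (fun x => exW m p ε i x ^ (p i)) (fun x => (‖exF m ε i x‖₊ : ℝ≥0∞)) =
      ENNReal.ofReal (1 / ε) ^ (1 / pp) := by
  simp_rw [wnorm_exF hε _ (hp _)]
  rw [ENNReal.prod_rpow_eq_rpow_sum _ _ (c := fun i => 1 / p i)
    fun i _ => one_div_nonneg.2 (by linarith [hp i]), ← hpp]

lemma setLIntegral_exF_ge (hε : 0 < ε) (i : Fin m) {t : ℝ} (ht : t ∈ Ioo 0 1) :
    ENNReal.ofReal (t ^ ε / ε) ≤
      ∫⁻ y in Cube 1 (fun _ => 0) (2 * t), (‖exF m ε i y‖₊ : ℝ≥0∞) := by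
  refine le_of_le_of_eq ?_ (setLIntegral_cube_one _ _
    fun s => (‖if 0 < s ∧ s < 1 then s ^ (-1 + ε) else 0‖₊ : ℝ≥0∞)).symm
  calc ENNReal.ofReal (t ^ ε / ε) = ∫⁻ s in Ioo 0 t, ENNReal.ofReal (s ^ (-1 + ε)) := by
        rw [lintegral_Ioo_rpow (by linarith) ht.1.le, neg_add_cancel_comm]
    _ = ∫⁻ s in Ioo 0 t, (‖if 0 < s ∧ s < 1 then s ^ (-1 + ε) else 0‖₊ : ℝ≥0∞) :=
        setLIntegral_congr_fun measurableSet_Ioo fun s hs => by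
          rw [if_pos ⟨hs.1, hs.2.trans ht.2⟩, ← enorm_eq_nnnorm,
            Real.enorm_eq_ofReal (Real.rpow_nonneg hs.1.le _)]
    _ ≤ _ := lintegral_mono_set fun s hs => by
        rw [mem_Ico]
        constructor <;> linarith [hs.1, hs.2]

lemma MFrac_exF_ge (hm : 0 < m) (hε : 0 < ε) (x : En 1) (hx : x 0 ∈ Ioo 0 1) :
    ENNReal.ofReal (2 ^ (α - m) * (1 / ε) ^ (m : ℝ) * x 0 ^ (α - m + m * ε)) ≤
      MFrac m 1 α (exF m ε) x := by
  set t := x 0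
  have ht : 0 < t := hx.1
  have hxC : x ∈ Cube 1 (fun _ => 0) (2 * t) := by
    rw [cube_one_eq_preimage]
    exact ⟨ht.le, by linarith⟩
  have hexp : (α / m - 1) * m = α - m := by field_simp
  have hfactor : ((2 * t) ^ (α / m - 1) * (t ^ ε / ε)) ^ (m : ℝ) =
      2 ^ (α - m) * (1 / ε) ^ (m : ℝ) * t ^ (α - m + m * ε) := by
    rw [Real.mul_rpow (by positivity) (by positivity), ← Real.rpow_mul (by positivity), hexp,
      Real.mul_rpow zero_le_two ht.le, div_eq_mul_one_div (t ^ ε),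
      Real.mul_rpow (Real.rpow_nonneg ht.le ε) (by positivity), ← Real.rpow_mul ht.le,
      show α - m + m * ε = (α - m) + ε * m by ring, Real.rpow_add ht]
    ring
  refine le_trans ?_ (le_iSup₂_of_le (fun _ => 0) (2 * t)
    (le_iSup₂_of_le (by positivity) hxC le_rfl))
  calc ENNReal.ofReal (2 ^ (α - m) * (1 / ε) ^ (m : ℝ) * t ^ (α - m + m * ε))
      = ∏ _i : Fin m, ENNReal.ofReal (2 * t) ^ (α / m - 1) * ENNReal.ofReal (t ^ ε / ε) := by
        rw [Finset.prod_const, Finset.card_univ, Fintype.card_fin,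
          ENNReal.ofReal_rpow_of_pos (by positivity), ← ENNReal.ofReal_mul (by positivity),
          ← ENNReal.ofReal_pow (by positivity), ← Real.rpow_natCast, hfactor]
    _ ≤ _ := by
        gcongr with i
        · rw [volume_cube_one, Nat.cast_one, mul_one]
        · exact setLIntegral_exF_ge hε i hx

lemma sum_one_sub_one_div (hpp : 1 / pp = ∑ i, 1 / p i) :
    ∑ i, (1 - 1 / p i) = m - 1 / pp := by
  simp [Finset.sum_sub_distrib, hpp]

lemma MFrac_rpow_mul_prod_exW_rpow_ge (hm : 0 < m) (hp : ∀ i, 1 < p i) (hε : 0 < ε)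
    (hε1 : ε < 1) (hpp : 1 / pp = ∑ i, 1 / p i) (hq0 : 0 < q) (x : En 1) (hx : x 0 ∈ Ioo 0 1) :
    ENNReal.ofReal ((2 ^ (α - m) * (1 / ε) ^ (m : ℝ)) ^ q *
        x 0 ^ ((α - m + m * ε) * q + q * ((1 - ε) * (m - 1 / pp)))) ≤
      MFrac m 1 α (exF m ε) x ^ q * (∏ i, exW m p ε i x) ^ q := by
  have ht := hx.1
  rw [prod_exW_rpow hp hε1 hq0.le (sum_one_sub_one_div hpp) x, abs_of_pos ht,
    Real.rpow_add ht, Real.rpow_mul ht.le, ← mul_assoc, ← Real.mul_rpow (by positivity)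
      (by positivity), ENNReal.ofReal_mul (by positivity),
    ← ENNReal.ofReal_rpow_of_nonneg (by positivity) hq0.le]
  gcongr
  exact MFrac_exF_ge hm hε x hx

lemma wnorm_MFrac_exF_ge (hm : 0 < m) (hp : ∀ i, 1 < p i) (hε : 0 < ε) (hε1 : ε < 1)
    (hpp : 1 / pp = ∑ i, 1 / p i) (hpp0 : 0 < pp) (hq0 : 0 < q) (hq : 1 / q = 1 / pp - α) :
    ENNReal.ofReal (2 ^ (α - m) * (pp / q) ^ (1 / q)) *
        ENNReal.ofReal (1 / ε) ^ ((m : ℝ) + 1 / q) ≤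
      wnorm 1 q (fun x => (∏ i, exW m p ε i x) ^ q) (MFrac m 1 α (exF m ε)) := by
  set C : ℝ := 2 ^ (α - m) * (1 / ε) ^ (m : ℝ) with hCdef
  have hC : 0 < C := by positivity
  set e : ℝ := (α - m + m * ε) * q + q * ((1 - ε) * (m - 1 / pp))
  have he : e + 1 = q * ε / pp := by
    have : q * (1 / pp - α) = 1 := by rw [← hq]; field_simp
    linear_combination -this
  have hint : ENNReal.ofReal (C ^ q * (pp / (q * ε))) ≤
      ∫⁻ x, MFrac m 1 α (exF m ε) x ^ q * (∏ i, exW m p ε i x) ^ q := by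
    refine le_trans (le_of_eq ?_) (lintegral_mono (f := fun x : En 1 => (Ioo 0 1).indicator
      (fun t => ENNReal.ofReal (C ^ q * t ^ e)) (x 0)) fun x => indicator_apply_le'
        (MFrac_rpow_mul_prod_exW_rpow_ge hm hp hε hε1 hpp hq0 x) fun _ => zero_le)
    rw [lintegral_comp_apply_zero fun t => (Ioo 0 1).indicator
        (fun t => ENNReal.ofReal (C ^ q * t ^ e)) t, lintegral_indicator measurableSet_Ioo]
    simp_rw [ENNReal.ofReal_mul (Real.rpow_nonneg hC.le q)]
    rw [lintegral_const_mul' _ _ ENNReal.ofReal_ne_top,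
      lintegral_Ioo_rpow (by nlinarith [show 0 < q * ε / pp by positivity]) zero_le_one,
      Real.one_rpow, he, one_div_div, mul_comm q ε, mul_comm ε q]
  rw [wnorm]
  refine le_trans (le_of_eq ?_) (ENNReal.rpow_le_rpow hint (by positivity))
  rw [ENNReal.ofReal_rpow_of_pos (by positivity), ← ENNReal.ofReal_mul (by positivity),
    ENNReal.ofReal_rpow_of_nonneg (by positivity) (by positivity),
    Real.mul_rpow (by positivity) (by positivity), one_div q, Real.rpow_rpow_inv hC.le hq0.ne',
    show pp / (q * ε) = pp / q * (1 / ε) by field_simp,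
    Real.mul_rpow (by positivity) (by positivity), Real.rpow_add (by positivity), hCdef]
  congr 1
  ring

lemma exists_Apq_exW_bounds (hp : ∀ i, 1 < p i) (hq : 0 ≤ q) (hs : ∑ i, (1 - 1 / p i) = s)
    (hs0 : 0 ≤ s) :
    ∃ c₁ c₂ : ℝ≥0, 0 < c₁ ∧ 0 < c₂ ∧ ∀ ε : ℝ, 0 < ε → ε < 1 →
      (c₁ : ℝ≥0∞) * ENNReal.ofReal (1 / ε) ^ (q * s) ≤ Apq m 1 p q (exW m p ε) ∧
        Apq m 1 p q (exW m p ε) ≤ c₂ * ENNReal.ofReal (1 / ε) ^ (q * s) :=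
  ⟨_, _, Real.toNNReal_pos.2 (by positivity : (0 : ℝ) < 1 / (q * s + 1)),
    Real.toNNReal_pos.2 (by positivity : (0 : ℝ) < 4 ^ (q * s)), fun _ hε hε1 =>
      ⟨Apq_exW_ge hp hε hε1 hq hs hs0, Apq_exW_le hp hε hε1 hq hs hs0⟩⟩

lemma exists_wnorm_MFrac_exF_ge (hm : 0 < m) (hp : ∀ i, 1 < p i)
    (hpp : 1 / pp = ∑ i, 1 / p i) (hpp0 : 0 < pp) (hq0 : 0 < q) (hq : 1 / q = 1 / pp - α) :
    ∃ c : ℝ≥0, 0 < c ∧ ∀ ε : ℝ, 0 < ε → ε < 1 →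
      (c : ℝ≥0∞) * ENNReal.ofReal (1 / ε) ^ ((m : ℝ) + 1 / q) ≤
        wnorm 1 q (fun x => (∏ i, exW m p ε i x) ^ q) (MFrac m 1 α (exF m ε)) :=
  ⟨_, Real.toNNReal_pos.2 (by positivity : (0 : ℝ) < 2 ^ (α - m) * (pp / q) ^ (1 / q)),
    fun _ hε hε1 => wnorm_MFrac_exF_ge hm hp hε hε1 hpp hpp0 hq0 hq⟩

end Example

theorem statement_8_general (m : ℕ) (hm : 0 < m) (p : Fin m → ℝ) (hp : ∀ i, 1 < p i)
    (pp q α : ℝ) (hpp : 1/pp = ∑ i, 1/p i) (hα : 0 < α)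
    (hpm : 1/(m:ℝ) < pp) (hpn : pp < 1/α) (hq : 1/q = 1/pp - α) :
    (∃ c₁ c₂ c₃ c₄ c₅ : ℝ≥0, 0 < c₁ ∧ 0 < c₂ ∧ 0 < c₃ ∧ 0 < c₄ ∧ 0 < c₅ ∧
      ∀ ε : ℝ, 0 < ε → ε < 1 →
        ((c₁ : ℝ≥0∞) * ENNReal.ofReal (1/ε) ^ (q * ((m:ℝ) - 1/pp)) ≤
            Apq m 1 p q (exW m p ε) ∧
          Apq m 1 p q (exW m p ε) ≤
            (c₂ : ℝ≥0∞) * ENNReal.ofReal (1/ε) ^ (q * ((m:ℝ) - 1/pp))) ∧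
        ((c₃ : ℝ≥0∞) * ENNReal.ofReal (1/ε) ^ (1/pp) ≤
            ∏ i, wnorm 1 (p i) (fun x => exW m p ε i x ^ (p i))
              (fun x => (‖exF m ε i x‖₊ : ℝ≥0∞)) ∧
          ∏ i, wnorm 1 (p i) (fun x => exW m p ε i x ^ (p i))
              (fun x => (‖exF m ε i x‖₊ : ℝ≥0∞)) ≤
            (c₄ : ℝ≥0∞) * ENNReal.ofReal (1/ε) ^ (1/pp)) ∧
        (c₅ : ℝ≥0∞) * ENNReal.ofReal (1/ε) ^ ((m:ℝ) + 1/q) ≤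
          wnorm 1 q (fun x => (∏ i, exW m p ε i x) ^ q) (MFrac m 1 α (exF m ε))) ∧
    ∀ (γ : ℝ) (C : ℝ≥0), 0 < C →
      (∀ (ω : Fin m → En 1 → ℝ≥0∞) (f : Fin m → En 1 → ℝ),
        Apq m 1 p q ω ≠ ⊤ →
        wnorm 1 q (fun x => (∏ i, ω i x) ^ q) (MFrac m 1 α f) ≤
          (C : ℝ≥0∞) * (Apq m 1 p q ω) ^ γ *
            ∏ i, wnorm 1 (p i) (fun x => ω i x ^ (p i))
              (fun x => (‖f i x‖₊ : ℝ≥0∞))) →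
      ((m:ℝ) * pp / (q * ((m:ℝ) * pp - 1))) * (1 - α/m) ≤ γ := by
  have hmR : (0 : ℝ) < m := Nat.cast_pos.2 hm
  have hpp0 : 0 < pp := (one_div_nonneg.2 hmR.le).trans_lt hpm
  have hq0 : 0 < q := one_div_pos.1 (hq ▸ sub_pos.2 ((lt_one_div hpp0 hα).1 hpn))
  have hs0 : 0 < (m : ℝ) - 1 / pp := sub_pos.2 ((one_div_lt hmR hpp0).1 hpm)
  obtain ⟨c₁, c₂, hc₁, hc₂, hApq⟩ :=
    exists_Apq_exW_bounds hp hq0.le (sum_one_sub_one_div hpp) hs0.le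
  obtain ⟨c₅, hc₅, hM⟩ := exists_wnorm_MFrac_exF_ge hm hp hpp hpp0 hq0 hq
  refine ⟨⟨c₁, c₂, 1, 1, c₅, hc₁, hc₂, one_pos, one_pos, hc₅, fun ε hε hε1 =>
    ⟨hApq ε hε hε1, by simp [prod_wnorm_exF hp hε hpp], hM ε hε hε1⟩⟩, fun γ C _ H => ?_⟩
  have hexp := le_mul_add_of_forall_rpow_bounds hc₁.ne' hc₅.ne' hApq
    (fun ε hε _ => prod_wnorm_exF hp hε hpp) hM fun ε hε hε1 => H _ _ <|
      ne_top_of_le_ne_top (by finiteness) (hApq ε hε hε1).2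
  have hmpp : 0 < (m : ℝ) * pp - 1 := by
    simpa [sub_mul, inv_mul_cancel₀ hpp0.ne'] using mul_pos hs0 hpp0
  calc (m : ℝ) * pp / (q * (m * pp - 1)) * (1 - α / m) = (m - α) / (q * (m - 1 / pp)) := by
        field_simp
    _ ≤ γ := (div_le_iff₀ (by positivity)).2 (by linarith)

/-- the one-dimensional example showing the lower bound
`γ ≥ (mp/(q(mp-1)))(1-α/m)` for the `A_{(P⃗,q)}` power of `M_α`. -/
theorem statement_8 (m : ℕ) (hm : 0 < m) (p : Fin m → ℝ) (hp : ∀ i, 1 < p i)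
    (pp q α : ℝ) (hpp : 1/pp = ∑ i, 1/p i) (hα : 0 < α) (hαm : α < m)
    (hpm : 1/(m:ℝ) < pp) (hpn : pp < 1/α) (hq : 1/q = 1/pp - α) :
    (∃ c₁ c₂ c₃ c₄ c₅ : ℝ≥0, 0 < c₁ ∧ 0 < c₂ ∧ 0 < c₃ ∧ 0 < c₄ ∧ 0 < c₅ ∧
      ∀ ε : ℝ, 0 < ε → ε < 1 →
        ((c₁ : ℝ≥0∞) * ENNReal.ofReal (1/ε) ^ (q * ((m:ℝ) - 1/pp)) ≤
            Apq m 1 p q (exW m p ε) ∧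
          Apq m 1 p q (exW m p ε) ≤
            (c₂ : ℝ≥0∞) * ENNReal.ofReal (1/ε) ^ (q * ((m:ℝ) - 1/pp))) ∧
        ((c₃ : ℝ≥0∞) * ENNReal.ofReal (1/ε) ^ (1/pp) ≤
            ∏ i, wnorm 1 (p i) (fun x => exW m p ε i x ^ (p i))
              (fun x => (‖exF m ε i x‖₊ : ℝ≥0∞)) ∧
          ∏ i, wnorm 1 (p i) (fun x => exW m p ε i x ^ (p i))
              (fun x => (‖exF m ε i x‖₊ : ℝ≥0∞)) ≤
            (c₄ : ℝ≥0∞) * ENNReal.ofReal (1/ε) ^ (1/pp)) ∧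
        (c₅ : ℝ≥0∞) * ENNReal.ofReal (1/ε) ^ ((m:ℝ) + 1/q) ≤
          wnorm 1 q (fun x => (∏ i, exW m p ε i x) ^ q) (MFrac m 1 α (exF m ε))) ∧
    ∀ (γ : ℝ) (C : ℝ≥0), 0 < C →
      (∀ (ω : Fin m → En 1 → ℝ≥0∞) (f : Fin m → En 1 → ℝ),
        Apq m 1 p q ω ≠ ⊤ →
        wnorm 1 q (fun x => (∏ i, ω i x) ^ q) (MFrac m 1 α f) ≤
          (C : ℝ≥0∞) * (Apq m 1 p q ω) ^ γ *
            ∏ i, wnorm 1 (p i) (fun x => ω i x ^ (p i))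
              (fun x => (‖f i x‖₊ : ℝ≥0∞))) →
      ((m:ℝ) * pp / (q * ((m:ℝ) * pp - 1))) * (1 - α/m) ≤ γ :=
  statement_8_general m hm p hp pp q α hpp hα hpm hpn hq
end
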